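/- Let q : ℝ → ℝ be a continuous function on the open half-line t > 0 with q(t) ≥ 0 for all t > 0, and suppose the integral g(t) = ∫₀ᵗ Aₙ(y/t) q(y) dy (where Aₙ(x) = ∫ₓ¹ (1−y)ⁿ/y dy) is finite for at least one value t = t₀ > 0. Define g̃(t) = ∫₀ᵗ (t−y)ⁿ q(y) dy for t > 0. Then for every k with 0 ≤ k ≤ n, the function g̃ is k times differentiable on the half-line t > 0 and its k-th derivative satisfies d^k g̃/dt^k (t) = (n! / (n−k)!) ∫₀ᵗ (t−y)^{n−k} q(y) dy for all t > 0. -/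

import Mathlib

open MeasureTheory Real Set Filter

/-- The kernel function `Aₙ(x) = ∫ₓ¹ (1−y)ⁿ/y dy`. -/
noncomputable def A (n : ℕ) (x : ℝ) : ℝ := ∫ y in x..1, (1 - y) ^ n / y

-- continuity / interval integrability of the kernel integrand on positive intervals
lemma kerInt (n : ℕ) {a b : ℝ} (ha : 0 < a) (hb : 0 < b) :
    IntervalIntegrable (fun y : ℝ => (1 - y) ^ n / y) volume a b := by
  apply ContinuousOn.intervalIntegrable
  apply ContinuousOn.div
  · fun_prop
  · exact continuousOn_id
  · intro y hy
    have : 0 < y := lt_of_lt_of_le (lt_min ha hb) hy.1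
    exact ne_of_gt this

lemma A_anti (n : ℕ) {x c : ℝ} (hx : 0 < x) (hxc : x ≤ c) (hc : c ≤ 1) :
    A n c ≤ A n x := by
  have hc0 : 0 < c := lt_of_lt_of_le hx hxc
  have h1 : A n x = (∫ y in x..c, (1 - y) ^ n / y) + A n c := by
    unfold A
    rw [intervalIntegral.integral_add_adjacent_intervals (kerInt n hx hc0)
      (kerInt n hc0 one_pos)]
  have h2 : 0 ≤ ∫ y in x..c, (1 - y) ^ n / y := by
    apply intervalIntegral.integral_nonneg hxc
    intro u hu
    have hu0 : 0 < u := lt_of_lt_of_le hx hu.1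
    have hu1 : u ≤ 1 := le_trans hu.2 hc
    have : (0:ℝ) ≤ (1-u)^n := pow_nonneg (by linarith) n
    positivity
  linarith

lemma A_pos (n : ℕ) : 0 < A n (1/2) := by
  apply intervalIntegral.intervalIntegral_pos_of_pos_on (kerInt n (by norm_num) one_pos)
  · intro x hx
    have h1 : 0 < 1 - x := by linarith [hx.2]
    have h2 : (0:ℝ) < x := by linarith [hx.1]
    positivity
  · norm_num

section Main
variable {n : ℕ} {q : ℝ → ℝ} {t₀ : ℝ}

lemma q_int (hq_cont : ContinuousOn q (Set.Ioi 0))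
    (hq_nonneg : ∀ t > (0 : ℝ), 0 ≤ q t)
    (ht₀ : 0 < t₀)
    (hfin : IntegrableOn (fun y => A n (y / t₀) * q y) (Set.Ioc 0 t₀)) :
    ∀ s : ℝ, IntegrableOn q (Set.Ioc 0 s) := by
  have hmeas : ∀ s : ℝ, AEStronglyMeasurable q (volume.restrict (Set.Ioc 0 s)) := by
    intro s
    exact (hq_cont.mono Set.Ioc_subset_Ioi_self).aestronglyMeasurable measurableSet_Ioc
  have hsmall : IntegrableOn q (Set.Ioc 0 (t₀/2)) := by
    have ha := A_pos n
    apply Integrable.mono'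
      (g := fun y => (A n (1/2))⁻¹ * (A n (y / t₀) * q y))
    · exact ((hfin.mono_set (Set.Ioc_subset_Ioc_right (by linarith))).const_mul _)
    · exact hmeas _
    · filter_upwards [ae_restrict_mem measurableSet_Ioc] with y hy
      have hy0 : 0 < y := hy.1
      have hy2 : y ≤ t₀ / 2 := hy.2
      have hqy : 0 ≤ q y := hq_nonneg y hy0
      rw [Real.norm_eq_abs, abs_of_nonneg hqy]
      have hA : A n (1/2) ≤ A n (y / t₀) := by
        apply A_anti n (by positivity)
        · rw [div_le_div_iff₀ (by positivity) (by norm_num)]; linarith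
        · norm_num
      rw [← mul_le_mul_iff_right₀ ha, ← mul_assoc, mul_inv_cancel₀ (ne_of_gt ha), one_mul]
      exact mul_le_mul_of_nonneg_right hA hqy
  intro s
  have : Set.Ioc (0:ℝ) s ⊆ Set.Ioc 0 (t₀/2) ∪ Set.Icc (t₀/2) s := by
    intro y hy
    rcases le_or_gt y (t₀/2) with h | h
    · exact Or.inl ⟨hy.1, h⟩
    · exact Or.inr ⟨le_of_lt h, hy.2⟩
  apply IntegrableOn.mono_set _ this
  apply hsmall.union
  apply ContinuousOn.integrableOn_Icc
  apply hq_cont.mono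
  intro y hy
  exact lt_of_lt_of_le (by linarith) hy.1

lemma pow_q_int (hq_cont : ContinuousOn q (Set.Ioi 0))
    (hq_nonneg : ∀ t > (0 : ℝ), 0 ≤ q t)
    (hqi : ∀ s : ℝ, IntegrableOn q (Set.Ioc 0 s)) (i : ℕ) :
    ∀ s : ℝ, IntegrableOn (fun y => y ^ i * q y) (Set.Ioc 0 s) := by
  intro s
  rcases le_or_gt s 0 with hs | hs
  · rw [Set.Ioc_eq_empty (by simpa using hs)]; simp [integrableOn_empty]
  apply Integrable.mono' (g := fun y => (max 1 s) ^ i * q y)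
  · exact (hqi s).const_mul _
  · apply AEStronglyMeasurable.mul
    · exact (Continuous.aestronglyMeasurable (by continuity)).restrict
    · exact (hq_cont.mono Set.Ioc_subset_Ioi_self).aestronglyMeasurable measurableSet_Ioc
  · filter_upwards [ae_restrict_mem measurableSet_Ioc] with y hy
    have hy0 : 0 < y := hy.1
    have hqy : 0 ≤ q y := hq_nonneg y hy0
    rw [Real.norm_eq_abs, abs_mul, abs_of_nonneg hqy, abs_of_nonneg (le_of_lt (by positivity : (0:ℝ) < y ^ i))]
    apply mul_le_mul_of_nonneg_right _ hqy
    apply pow_le_pow_left₀ (le_of_lt hy0)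
    exact le_trans hy.2 (le_max_right 1 s)

end Main


section Core
variable {n : ℕ} {q : ℝ → ℝ}

lemma G_deriv (hq_cont : ContinuousOn q (Set.Ioi 0))
    (hyi : ∀ i : ℕ, ∀ s : ℝ, IntegrableOn (fun y => y ^ i * q y) (Set.Ioc 0 s))
    (i : ℕ) {t : ℝ} (ht : 0 < t) :
    HasDerivAt (fun s => ∫ y in Set.Ioc (0:ℝ) s, y ^ i * q y) (t ^ i * q t) t := by
  set f : ℝ → ℝ := fun y => y ^ i * q y with hf
  have hfc : ContinuousOn f (Set.Ioi 0) := (continuousOn_pow i).mul hq_cont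
  have h1 : HasDerivAt (fun u => ∫ y in (0:ℝ)..u, f y) (f t) t := by
    apply intervalIntegral.integral_hasDerivAt_right
    · exact (intervalIntegrable_iff_integrableOn_Ioc_of_le (le_of_lt ht)).2 (hyi i t)
    · exact ⟨Set.Ioi 0, Ioi_mem_nhds ht, hfc.aestronglyMeasurable measurableSet_Ioi⟩
    · exact hfc.continuousAt (Ioi_mem_nhds ht)
  apply h1.congr_of_eventuallyEq
  filter_upwards [Ioi_mem_nhds ht] with u hu
  rw [intervalIntegral.integral_of_le (le_of_lt hu)]

lemma F_expand
    (hyi : ∀ i : ℕ, ∀ s : ℝ, IntegrableOn (fun y => y ^ i * q y) (Set.Ioc 0 s))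
    (m : ℕ) (s : ℝ) :
    (∫ y in Set.Ioc (0:ℝ) s, (s - y) ^ m * q y) =
      ∑ j ∈ Finset.range (m+1),
        ((-1:ℝ) ^ (m-j) * (m.choose j)) *
          (s ^ j * ∫ y in Set.Ioc (0:ℝ) s, y ^ (m-j) * q y) := by
  have key : ∀ y : ℝ, (s - y) ^ m * q y =
      ∑ j ∈ Finset.range (m+1),
        (((-1:ℝ) ^ (m-j) * (m.choose j)) * s ^ j) * (y ^ (m-j) * q y) := by
    intro y
    rw [sub_eq_add_neg, Commute.add_pow (Commute.all s (-y)), Finset.sum_mul]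
    apply Finset.sum_congr rfl
    intro j _
    rw [neg_pow]
    ring
  simp_rw [key]
  rw [integral_finset_sum]
  · apply Finset.sum_congr rfl
    intro j _
    rw [integral_const_mul]
    ring
  · intro j _
    exact ((hyi (m-j) s).const_mul _)

lemma F_deriv (hq_cont : ContinuousOn q (Set.Ioi 0))
    (hyi : ∀ i : ℕ, ∀ s : ℝ, IntegrableOn (fun y => y ^ i * q y) (Set.Ioc 0 s))
    (m : ℕ) {t : ℝ} (ht : 0 < t) :
    HasDerivAt (fun s => ∫ y in Set.Ioc (0:ℝ) s, (s - y) ^ (m+1) * q y)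
      ((m+1 : ℝ) * ∫ y in Set.Ioc (0:ℝ) t, (t - y) ^ m * q y) t := by
  have heq : (fun s => ∫ y in Set.Ioc (0:ℝ) s, (s - y) ^ (m+1) * q y) =
      fun s => ∑ j ∈ Finset.range (m+2),
        ((-1:ℝ) ^ (m+1-j) * ((m+1).choose j)) *
          (s ^ j * ∫ y in Set.Ioc (0:ℝ) s, y ^ (m+1-j) * q y) := by
    funext s
    exact F_expand hyi (m+1) s
  rw [heq]
  have hsum : HasDerivAt
      (fun s => ∑ j ∈ Finset.range (m+2),
        ((-1:ℝ) ^ (m+1-j) * ((m+1).choose j)) *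
          (s ^ j * ∫ y in Set.Ioc (0:ℝ) s, y ^ (m+1-j) * q y))
      (∑ j ∈ Finset.range (m+2),
        ((-1:ℝ) ^ (m+1-j) * ((m+1).choose j)) *
          ((j : ℝ) * t ^ (j-1) * (∫ y in Set.Ioc (0:ℝ) t, y ^ (m+1-j) * q y)
            + t ^ j * (t ^ (m+1-j) * q t))) t := by
    apply HasDerivAt.fun_sum
    intro j _
    exact ((hasDerivAt_pow j t).mul (G_deriv hq_cont hyi (m+1-j) ht)).const_mul _
  convert hsum using 1
  rw [F_expand hyi m t, Finset.mul_sum]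
  simp_rw [mul_add]
  rw [Finset.sum_add_distrib]
  have h2 : ∑ j ∈ Finset.range (m+2), ((-1:ℝ)^(m+1-j) * (((m+1).choose j : ℕ) : ℝ)) *
      (t ^ j * (t ^ (m+1-j) * q t)) = 0 := by
    have h3 : ∑ j ∈ Finset.range (m+2), ((-1:ℝ)^(m+1-j) * (((m+1).choose j : ℕ) : ℝ)) *
        (t ^ j * (t ^ (m+1-j) * q t)) = ((t + -t) ^ (m+1)) * q t := by
      rw [Commute.add_pow (Commute.all t (-t)), Finset.sum_mul]
      apply Finset.sum_congr rfl
      intro j _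
      rw [neg_pow]
      ring
    rw [h3]
    simp
  rw [h2, add_zero]
  conv_rhs => rw [Finset.sum_range_succ']
  simp only [Nat.cast_zero, zero_mul, mul_zero, add_zero, Nat.succ_sub_succ,
    Nat.add_sub_cancel, Nat.sub_zero, Nat.cast_add, Nat.cast_one]
  apply Finset.sum_congr rfl
  intro i _
  have hcc : ((m:ℝ)+1) * (m.choose i) = (((m+1).choose (i+1) : ℕ) : ℝ) * ((i:ℝ)+1) := by
    exact_mod_cast congrArg (Nat.cast : ℕ → ℝ) (Nat.add_one_mul_choose_eq m i)
  linear_combination ((-1:ℝ)^(m-i) * t^i * (∫ y in Set.Ioc (0:ℝ) t, y ^ (m-i) * q y)) * hcc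

end Core

theorem stmt_5 (n : ℕ) (q gTilde : ℝ → ℝ)
    (hq_cont : ContinuousOn q (Set.Ioi 0))
    (hq_nonneg : ∀ t > (0 : ℝ), 0 ≤ q t)
    (t₀ : ℝ) (ht₀ : 0 < t₀)
    (hfin : IntegrableOn (fun y => A n (y / t₀) * q y) (Set.Ioc 0 t₀))
    (hgt : ∀ s : ℝ, gTilde s = ∫ y in Set.Ioc (0 : ℝ) s, (s - y) ^ n * q y) :
    ∀ k ≤ n,
      (∀ j < k, ∀ t > (0 : ℝ), DifferentiableAt ℝ (iteratedDeriv j gTilde) t) ∧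
      (∀ t > (0 : ℝ),
        iteratedDeriv k gTilde t =
          ((n.factorial : ℝ) / ((n - k).factorial : ℝ)) *
            ∫ y in Set.Ioc (0 : ℝ) t, (t - y) ^ (n - k) * q y) := by
  have hqi := q_int hq_cont hq_nonneg ht₀ hfin
  have hyi := pow_q_int hq_cont hq_nonneg hqi
  have key : ∀ k, k ≤ n → ∀ t > (0:ℝ), iteratedDeriv k gTilde t =
      ((n.factorial : ℝ) / ((n - k).factorial : ℝ)) *
        ∫ y in Set.Ioc (0:ℝ) t, (t - y) ^ (n - k) * q y := by
    intro k
    induction k with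
    | zero =>
      intro _ t _
      simp only [Nat.sub_zero, iteratedDeriv_zero]
      rw [hgt t, div_self (Nat.cast_ne_zero.2 n.factorial_ne_zero), one_mul]
    | succ k ih =>
      intro hk t ht
      have hkn : k ≤ n := le_of_lt (Nat.lt_of_succ_le hk)
      obtain ⟨m, hm⟩ : ∃ m, n - k = m + 1 := ⟨n - (k+1), by omega⟩
      have hm2 : n - (k+1) = m := by omega
      rw [iteratedDeriv_succ]
      have heq : iteratedDeriv k gTilde =ᶠ[nhds t]
          fun s => ((n.factorial : ℝ) / ((n - k).factorial : ℝ)) *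
            ∫ y in Set.Ioc (0:ℝ) s, (s - y) ^ (n - k) * q y := by
        filter_upwards [Ioi_mem_nhds ht] with u hu
        exact ih hkn u hu
      rw [heq.deriv_eq]
      have hd : HasDerivAt
          (fun s => ((n.factorial : ℝ) / ((n - k).factorial : ℝ)) *
            ∫ y in Set.Ioc (0:ℝ) s, (s - y) ^ (n - k) * q y)
          (((n.factorial : ℝ) / ((n - k).factorial : ℝ)) *
            ((m + 1 : ℝ) * ∫ y in Set.Ioc (0:ℝ) t, (t - y) ^ m * q y)) t := by
        rw [hm]
        exact (F_deriv hq_cont hyi m ht).const_mul _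
      rw [hd.deriv, hm2, hm, Nat.factorial_succ]
      have h1 : ((m.factorial : ℕ) : ℝ) ≠ 0 := Nat.cast_ne_zero.2 m.factorial_ne_zero
      have h2 : ((m : ℝ) + 1) ≠ 0 := by positivity
      push_cast
      field_simp
  intro k hk
  refine ⟨?_, fun t ht => key k hk t ht⟩
  intro j hj t ht
  have hjn : j ≤ n := le_trans (le_of_lt hj) hk
  obtain ⟨m, hm⟩ : ∃ m, n - j = m + 1 := ⟨n - (j+1), by omega⟩
  have hd := (F_deriv hq_cont hyi m ht).const_mul
    ((n.factorial : ℝ) / ((n - j).factorial : ℝ))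
  have heq : iteratedDeriv j gTilde =ᶠ[nhds t]
      fun s => ((n.factorial : ℝ) / ((n - j).factorial : ℝ)) *
        ∫ y in Set.Ioc (0:ℝ) s, (s - y) ^ (m + 1) * q y := by
    filter_upwards [Ioi_mem_nhds ht] with u hu
    rw [key j hjn u hu, hm]
  exact (hd.congr_of_eventuallyEq heq).differentiableAt
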